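/- Let ψ be either ψ₁(x) = (x−1)/(x+1) or ψ₂(x) = (x−1)/√(x²+1). Then for every fixed y > 0 the map x ↦ ψ(√(x/y)) is concave on [0,∞), for every fixed x > 0 the map y ↦ ψ(√(x/y)) is convex on (0,∞), and ψ(√(x/y)) = −ψ(√(y/x)) for all x, y > 0. -/

import Mathlib

/-!
Both functions satisfy `ψ (1 / t) = -ψ t`, and `√(y / x) = 1 / √(x / y)`; this gives the
antisymmetry, which in turn turns convexity in `y` into concavity in `x`. After the linear change
of variables `x ↦ x / y`, concavity in `x` is concavity of `s ↦ ψ (√s)` on `[0, ∞)`. For `ψ₁` this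
function is `1 - 2 / (√s + 1)`; for `ψ₂`, which is itself not concave near `0`, it is
`√(s / (s + 1)) - 1 / √(s + 1)`. Both are concave because the square root of a nonnegative concave
function is concave and the reciprocal of a positive concave function is convex.
-/

open Set Real

section Composition

variable {𝕜 E β γ : Type*} [Semiring 𝕜] [PartialOrder 𝕜] [AddCommMonoid E] [SMul 𝕜 E]
  [AddCommMonoid β] [PartialOrder β] [SMul 𝕜 β] [AddCommMonoid γ] [PartialOrder γ] [SMul 𝕜 γ]
  {s : Set E} {t : Set β} {f : E → β} {g : β → γ}

theorem ConcaveOn.comp_of_mapsTo (hg : ConcaveOn 𝕜 t g) (hf : ConcaveOn 𝕜 s f)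
    (hg' : MonotoneOn g t) (hst : MapsTo f s t) : ConcaveOn 𝕜 s (g ∘ f) :=
  ⟨hf.1, fun _ hx _ hy _ _ ha hb hab =>
    (hg.2 (hst hx) (hst hy) ha hb hab).trans <|
      hg' (hg.1 (hst hx) (hst hy) ha hb hab) (hst <| hf.1 hx hy ha hb hab) (hf.2 hx hy ha hb hab)⟩

theorem ConvexOn.comp_concaveOn_of_mapsTo (hg : ConvexOn 𝕜 t g) (hf : ConcaveOn 𝕜 s f)
    (hg' : AntitoneOn g t) (hst : MapsTo f s t) : ConvexOn 𝕜 s (g ∘ f) :=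
  ⟨hf.1, fun _ hx _ hy _ _ ha hb hab =>
    (hg' (hg.1 (hst hx) (hst hy) ha hb hab) (hst <| hf.1 hx hy ha hb hab)
      (hf.2 hx hy ha hb hab)).trans (hg.2 (hst hx) (hst hy) ha hb hab)⟩

end Composition

section RealValued

variable {E : Type*} [AddCommMonoid E] [SMul ℝ E] {s : Set E} {f : E → ℝ}

theorem ConcaveOn.sqrt (hf : ConcaveOn ℝ s f) (hf₀ : ∀ x ∈ s, 0 ≤ f x) :
    ConcaveOn ℝ s fun x => √(f x) :=
  strictConcaveOn_sqrt.concaveOn.comp_of_mapsTo hf (fun _ _ _ _ h => Real.sqrt_le_sqrt h) hf₀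

theorem ConcaveOn.convexOn_inv (hf : ConcaveOn ℝ s f) (hf₀ : ∀ x ∈ s, 0 < f x) :
    ConvexOn ℝ s fun x => (f x)⁻¹ := by
  have hinv : ConvexOn ℝ (Ioi 0) fun u : ℝ => u⁻¹ := by simpa using convexOn_zpow (𝕜 := ℝ) (-1)
  exact hinv.comp_concaveOn_of_mapsTo hf (fun _ hu _ _ h => inv_anti₀ hu h) hf₀

end RealValued

theorem concaveOn_psi1_comp_sqrt :
    ConcaveOn ℝ (Ici 0) fun s : ℝ => (√s - 1) / (√s + 1) := by
  have hden : ConcaveOn ℝ (Ici 0) fun s : ℝ => √s + 1 :=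
    strictConcaveOn_sqrt.concaveOn.add_const 1
  have h := (concaveOn_const (1 : ℝ) (convex_Ici 0)).sub
    ((hden.convexOn_inv fun s _ => by positivity).smul (c := (2 : ℝ)) zero_le_two)
  refine h.congr fun s _ => ?_
  have : √s + 1 ≠ 0 := by positivity
  simp only [Pi.sub_apply, smul_eq_mul]
  field_simp
  ring

theorem concaveOn_psi2_comp_sqrt :
    ConcaveOn ℝ (Ici 0) fun s : ℝ => (√s - 1) / √(√s ^ 2 + 1) := by
  have hpos : ∀ s ∈ Ici (0 : ℝ), 0 < s + 1 := fun s (hs : 0 ≤ s) => by linarith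
  have hshift : ConcaveOn ℝ (Ici 0) fun s : ℝ => s + 1 := (concaveOn_id (convex_Ici 0)).add_const 1
  have hratio : ConcaveOn ℝ (Ici 0) fun s : ℝ => √(1 - (s + 1)⁻¹) :=
    ((concaveOn_const 1 (convex_Ici 0)).sub (hshift.convexOn_inv hpos)).sqrt
      fun s (hs : 0 ≤ s) => sub_nonneg.2 (inv_le_one_of_one_le₀ (by linarith))
  have h := hratio.sub ((hshift.sqrt fun s hs => (hpos s hs).le).convexOn_inv
    fun s hs => Real.sqrt_pos.2 (hpos s hs))
  refine h.congr fun s (hs : 0 ≤ s) => ?_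
  have h1 : 1 - (s + 1)⁻¹ = s / (s + 1) := by field_simp; ring
  simp only [Pi.sub_apply]
  rw [Real.sq_sqrt hs, h1, Real.sqrt_div hs]
  have : 0 < √(s + 1) := by positivity
  field_simp

theorem psi1_inv {t : ℝ} (ht : 0 < t) : (t⁻¹ - 1) / (t⁻¹ + 1) = -((t - 1) / (t + 1)) := by
  field_simp
  ring

theorem psi2_inv {t : ℝ} (ht : 0 < t) :
    (t⁻¹ - 1) / √(t⁻¹ ^ 2 + 1) = -((t - 1) / √(t ^ 2 + 1)) := by
  rw [show t⁻¹ ^ 2 + 1 = (t ^ 2 + 1) / t ^ 2 by field_simp; ring, Real.sqrt_div' _ (sq_nonneg t),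
    Real.sqrt_sq ht.le]
  have : 0 < √(t ^ 2 + 1) := by positivity
  field_simp
  ring

section SqrtRatio

variable {ψ : ℝ → ℝ}

theorem ConcaveOn.comp_sqrt_div (hψ : ConcaveOn ℝ (Ici 0) fun s => ψ √s) {y : ℝ} (hy : 0 < y) :
    ConcaveOn ℝ (Ici 0) fun x => ψ √(x / y) :=
  (hψ.comp_linearMap (y⁻¹ • LinearMap.id)).subset
    (fun x hx => by simpa using mul_nonneg (inv_nonneg.2 hy.le) hx) (convex_Ici 0) |>.congr
    fun x _ => by simp [div_eq_inv_mul]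

theorem comp_sqrt_div_eq_neg (hψ : ∀ t, 0 < t → ψ t⁻¹ = -ψ t) {x y : ℝ} (hx : 0 < x)
    (hy : 0 < y) : ψ √(x / y) = -ψ √(y / x) := by
  rw [← inv_div, Real.sqrt_inv, hψ _ (by positivity)]

theorem ConcaveOn.convexOn_comp_sqrt_div (hψ : ConcaveOn ℝ (Ici 0) fun s => ψ √s)
    (hψ_inv : ∀ t, 0 < t → ψ t⁻¹ = -ψ t) {x : ℝ} (hx : 0 < x) :
    ConvexOn ℝ (Ioi 0) fun y => ψ √(x / y) :=
  ((hψ.comp_sqrt_div hx).neg.subset Ioi_subset_Ici_self (convex_Ioi 0)).congr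
    fun _ hy => (comp_sqrt_div_eq_neg hψ_inv hx hy).symm

end SqrtRatio

theorem psi_sqrt_ratio_concave_convex_antisym (ψ : ℝ → ℝ)
    (hψ : (ψ = fun x => (x - 1) / (x + 1)) ∨
      (ψ = fun x => (x - 1) / Real.sqrt (x ^ 2 + 1))) :
    (∀ y : ℝ, 0 < y → ConcaveOn ℝ (Set.Ici 0) (fun x => ψ (Real.sqrt (x / y)))) ∧
    (∀ x : ℝ, 0 < x → ConvexOn ℝ (Set.Ioi 0) (fun y => ψ (Real.sqrt (x / y)))) ∧
    (∀ x : ℝ, 0 < x → ∀ y : ℝ, 0 < y →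
      ψ (Real.sqrt (x / y)) = -ψ (Real.sqrt (y / x))) := by
  obtain ⟨hconc, hinv⟩ :
      (ConcaveOn ℝ (Ici 0) fun s => ψ √s) ∧ ∀ t, 0 < t → ψ t⁻¹ = -ψ t := by
    rcases hψ with rfl | rfl
    exacts [⟨concaveOn_psi1_comp_sqrt, fun _ => psi1_inv⟩,
      ⟨concaveOn_psi2_comp_sqrt, fun _ => psi2_inv⟩]
  exact ⟨fun _ => hconc.comp_sqrt_div, fun _ => hconc.convexOn_comp_sqrt_div hinv,
    fun _ hx _ hy => comp_sqrt_div_eq_neg hinv hx hy⟩
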